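/- If K is a path-connected subset of ℝⁿ that is topologically homogeneous (for any x, y ∈ K there are open neighborhoods U_x, U_y in ℝⁿ and a homeomorphism φ : U_x → U_y with φ(x) = y and φ(U_x ∩ K) = U_y ∩ K) and K contains a subset homeomorphic to a simple triod with branch point x₀, then every point of K is the branch point of a simple triod contained in K. -/

import Mathlib

/-! Homogeneity carries a neighbourhood of `x₀` onto a neighbourhood of `y` by a homeomorphism
preserving `K`. A triod contains arbitrarily small triods with the same branch point (shrink the
model towards its cone point), so a triod at `x₀` small enough to lie in that neighbourhood is
carried to a triod in `K` branched at `y`. -/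

open Set

/-- The model simple triod in the plane: three segments sharing exactly the
common endpoint `0` (the cone over three points); `0` is its branch point. -/
def TriodSet : Set (ℝ × ℝ) :=
  segment ℝ (0, 0) (1, 0) ∪ segment ℝ (0, 0) (0, 1) ∪ segment ℝ (0, 0) (-1, 0)

lemma zero_mem_TriodSet : ((0, 0) : ℝ × ℝ) ∈ TriodSet :=
  Or.inl (Or.inl (left_mem_segment ℝ _ _))

/-- `T` is a simple triod in `E` with branch point `p`: `T` is a homeomorphic
copy of the model triod with the cone point sent to `p` (a continuous injection
of the compact model with range `T` is automatically an embedding). -/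
def IsTriodAt {E : Type*} [TopologicalSpace E] (T : Set E) (p : E) : Prop :=
  ∃ e : TriodSet → E, Continuous e ∧ Function.Injective e ∧
    Set.range e = T ∧ e ⟨(0, 0), zero_mem_TriodSet⟩ = p

/-- Topological homogeneity of `K ⊆ E`: any two points of `K` are exchanged by
a homeomorphism between ambient open neighborhoods preserving `K`. -/
def TopHomogeneous {E : Type*} [TopologicalSpace E] (K : Set E) : Prop :=
  ∀ x ∈ K, ∀ y ∈ K, ∃ (Ux Uy : Set E) (φ ψ : E → E),
    IsOpen Ux ∧ IsOpen Uy ∧ x ∈ Ux ∧ y ∈ Uy ∧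
    ContinuousOn φ Ux ∧ ContinuousOn ψ Uy ∧ Set.BijOn φ Ux Uy ∧
    Set.InvOn ψ φ Ux Uy ∧ φ x = y ∧ φ '' (Ux ∩ K) = Uy ∩ K

open Filter Topology

lemma starConvex_TriodSet : StarConvex ℝ 0 TriodSet :=
  (((convex_segment _ _).starConvex (left_mem_segment ℝ _ _)).union
    ((convex_segment _ _).starConvex (left_mem_segment ℝ _ _))).union
    ((convex_segment _ _).starConvex (left_mem_segment ℝ _ _))

lemma isCompact_TriodSet : IsCompact TriodSet := by
  have hseg : ∀ a : ℝ × ℝ, IsCompact (segment ℝ (0, 0) a) := fun a => by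
    rw [segment_eq_image]
    exact isCompact_Icc.image (by fun_prop)
  exact ((hseg _).union (hseg _)).union (hseg _)

lemma TriodSet.exists_smul_mapsTo {V : Set (ℝ × ℝ)} (hV : V ∈ 𝓝 0) :
    ∃ ε : ℝ, 0 < ε ∧ ε ≤ 1 ∧ MapsTo (ε • ·) TriodSet V := by
  have hsmall : ∀ᶠ c : ℝ in 𝓝 0, MapsTo (c • ·) TriodSet V :=
    (isCompact_TriodSet.isVonNBounded ℝ hV).eventually_nhds_zero (mem_of_mem_nhds hV)
  obtain ⟨ε, hmaps, hε⟩ := ((hsmall.filter_mono nhdsWithin_le_nhds).and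
    (Ioc_mem_nhdsGT one_pos)).exists
  exact ⟨ε, hε.1, hε.2, hmaps⟩

lemma IsTriodAt.exists_subset_of_mem_nhds {E : Type*} [TopologicalSpace E] {T U : Set E} {p : E}
    (hT : IsTriodAt T p) (hU : U ∈ 𝓝 p) : ∃ T' ⊆ T ∩ U, IsTriodAt T' p := by
  obtain ⟨e, he_cont, he_inj, rfl, rfl⟩ := hT
  obtain ⟨V, hV, hVU⟩ := (mem_nhds_subtype _ _ _).mp (he_cont.continuousAt.preimage_mem_nhds hU)
  obtain ⟨ε, hε0, hε1, hεV⟩ := TriodSet.exists_smul_mapsTo hV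
  let shrink : TriodSet → TriodSet :=
    fun t => ⟨ε • (t : ℝ × ℝ), starConvex_TriodSet.smul_mem t.2 hε0.le hε1⟩
  have hshrink_inj : Function.Injective shrink := fun s t hst =>
    Subtype.ext (smul_right_injective _ hε0.ne' (congrArg Subtype.val hst))
  refine ⟨range (e ∘ shrink), ?_, e ∘ shrink, he_cont.comp (by fun_prop),
    he_inj.comp hshrink_inj, rfl, ?_⟩
  · rintro _ ⟨t, rfl⟩
    exact ⟨mem_range_self _, hVU (hεV t.2)⟩
  · exact congrArg e (Subtype.ext (smul_zero ε))

lemma IsTriodAt.image {E F : Type*} [TopologicalSpace E] [TopologicalSpace F] {T : Set E} {p : E}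
    {φ : E → F} (hT : IsTriodAt T p) (hφc : ContinuousOn φ T) (hφi : InjOn φ T) :
    IsTriodAt (φ '' T) (φ p) := by
  obtain ⟨e, he_cont, he_inj, rfl, rfl⟩ := hT
  exact ⟨φ ∘ e, hφc.comp_continuous he_cont mem_range_self,
    fun s t hst => he_inj (hφi (mem_range_self s) (mem_range_self t) hst), range_comp φ e, rfl⟩

theorem triod_at_every_point_general {n : ℕ} (K : Set (EuclideanSpace ℝ (Fin n)))
    (hhom : TopHomogeneous K)
    (x₀ : EuclideanSpace ℝ (Fin n)) (hx₀ : x₀ ∈ K)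
    (hT : ∃ T ⊆ K, IsTriodAt T x₀) :
    ∀ y ∈ K, ∃ T ⊆ K, IsTriodAt T y := by
  intro y hy
  obtain ⟨T, hTK, hT⟩ := hT
  obtain ⟨Ux, Uy, φ, -, hUx, -, hx₀Ux, -, hφc, -, hφbij, -, hφx₀, hφK⟩ := hhom x₀ hx₀ y hy
  obtain ⟨T', hT'T, hT'⟩ := hT.exists_subset_of_mem_nhds (hUx.mem_nhds hx₀Ux)
  have hT'UxK : T' ⊆ Ux ∩ K := fun t ht => ⟨(hT'T ht).2, hTK (hT'T ht).1⟩
  have hT'Ux : T' ⊆ Ux := hT'UxK.trans inter_subset_left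
  refine ⟨φ '' T', ?_, hφx₀ ▸ hT'.image (hφc.mono hT'Ux) (hφbij.injOn.mono hT'Ux)⟩
  calc φ '' T' ⊆ φ '' (Ux ∩ K) := image_mono hT'UxK
    _ = Uy ∩ K := hφK
    _ ⊆ K := inter_subset_right

/-- a path-connected topologically homogeneous subset of ℝⁿ that
contains a simple triod has a simple triod branched at each of its points. -/
theorem triod_at_every_point {n : ℕ} (K : Set (EuclideanSpace ℝ (Fin n)))
    (hpc : IsPathConnected K) (hhom : TopHomogeneous K)
    (x₀ : EuclideanSpace ℝ (Fin n)) (hx₀ : x₀ ∈ K)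
    (hT : ∃ T ⊆ K, IsTriodAt T x₀) :
    ∀ y ∈ K, ∃ T ⊆ K, IsTriodAt T y :=
  triod_at_every_point_general K hhom x₀ hx₀ hT
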